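/- arXiv:2110.11152 — 4 statements merged into one kernel-verified Lean document; each statement's English description precedes it below -/
import Mathlib

section
/- Let R : ℝⁿ → ℝⁿ be a reversing symmetry of the autonomous ODE dx/dt = F(x) (i.e., DR(x)F(x) = −F(R(x)) for all x), and suppose R is an involution. Then an orbit of the ODE is R-symmetric (invariant as a set under R) if and only if it intersects the fixed-point set Fix(R) = {x : R(x) = x}. -/
/-!
A reversing symmetry conjugates the flow to its time reversal: `u ↦ R (φ (-u) x)` solves the
same ODE as `u ↦ φ u (R x)` and starts at `R x`, so `R (φ t x) = φ (-t) (R x)` by uniqueness.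
Hence `R` maps the orbit of a fixed point `y` onto `{φ (-t) y}`, the same orbit. Conversely, if
`R x₀ = φ T x₀` then the midpoint `φ (T / 2) x₀` is fixed by `R`.
-/

open Set Filter Topology

theorem LocallyLipschitz.ODE_solution_unique {E : Type*} [NormedAddCommGroup E]
    [NormedSpace ℝ E] {F : E → E} (hF : LocallyLipschitz F) {f g : ℝ → E}
    (hf : ∀ t, HasDerivAt f (F (f t)) t) (hg : ∀ t, HasDerivAt g (F (g t)) t)
    (h0 : f 0 = g 0) : f = g := by
  have hclosed : IsClosed {t | f t = g t} :=
    isClosed_eq (continuous_iff_continuousAt.2 fun t => (hf t).continuousAt)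
      (continuous_iff_continuousAt.2 fun t => (hg t).continuousAt)
  have hopen : IsOpen {t | f t = g t} := by
    refine isOpen_iff_mem_nhds.2 fun t₀ (ht₀ : f t₀ = g t₀) => ?_
    obtain ⟨K, s, hs, hlip⟩ := hF (f t₀)
    have hs' : s ∈ 𝓝 (g t₀) := ht₀ ▸ hs
    exact ODE_solution_unique_of_eventually (v := fun _ => F) (s := fun _ => s)
      (.of_forall fun _ => hlip)
      (eventually_of_mem ((hf t₀).continuousAt.preimage_mem_nhds hs) fun t ht => ⟨hf t, ht⟩)
      (eventually_of_mem ((hg t₀).continuousAt.preimage_mem_nhds hs') fun t ht => ⟨hg t, ht⟩)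
      ht₀
  have hall : {t | f t = g t} = univ := IsClopen.eq_univ ⟨hclosed, hopen⟩ ⟨0, h0⟩
  exact funext (eq_univ_iff_forall.1 hall)

theorem apply_flow_eq_flow_neg_apply {E : Type*} [NormedAddCommGroup E] [NormedSpace ℝ E]
    {F : E → E} (hF : LocallyLipschitz F) {φ : ℝ → E → E} (hφ0 : ∀ x, φ 0 x = x)
    (hsol : ∀ x t, HasDerivAt (fun τ => φ τ x) (F (φ t x)) t)
    {R : E → E} {DR : E → E →L[ℝ] E} (hR : ∀ x, HasFDerivAt R (DR x) x)
    (hrev : ∀ x, DR x (F x) = -F (R x)) (x : E) (t : ℝ) :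
    R (φ t x) = φ (-t) (R x) := by
  have hreversed : ∀ u, HasDerivAt (fun u => R (φ (-u) x)) (F (R (φ (-u) x))) u := by
    intro u
    have hback : HasDerivAt (fun u => φ (-u) x) (-F (φ (-u) x)) u := by
      simpa [Function.comp_def] using (hsol x (-u)).scomp u (hasDerivAt_neg u)
    simpa [Function.comp_def, hrev] using (hR (φ (-u) x)).comp_hasDerivAt u hback
  have h := hF.ODE_solution_unique hreversed (fun u => hsol (R x) u) (by simp [hφ0])
  simpa using congrFun h (-t)

section Orbit

variable {X : Type*} {φ : ℝ → X → X}

theorem range_flow_apply (hflow : ∀ s t x, φ (s + t) x = φ s (φ t x)) (x : X) (t : ℝ) :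
    range (fun s => φ s (φ t x)) = range (fun s => φ s x) := by
  simp_rw [← hflow]
  exact (Equiv.addRight t).surjective.range_comp (fun s => φ s x)

variable {R : X → X} (hflow : ∀ s t x, φ (s + t) x = φ s (φ t x))
  (hconj : ∀ x t, R (φ t x) = φ (-t) (R x))
include hflow hconj

theorem image_range_flow_of_apply_eq (x₀ : X) (hfix : ∃ y ∈ range (fun t => φ t x₀), R y = y) :
    R '' range (fun t => φ t x₀) = range (fun t => φ t x₀) := by
  obtain ⟨_, ⟨s, rfl⟩, hy : R (φ s x₀) = φ s x₀⟩ := hfix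
  have hreverse : R ∘ (fun t => φ t (φ s x₀)) = (fun t => φ t (φ s x₀)) ∘ Neg.neg :=
    funext fun t => by rw [Function.comp_apply, hconj, hy, Function.comp_apply]
  rw [← range_flow_apply hflow x₀ s, ← range_comp, hreverse]
  exact neg_surjective.range_comp _

theorem exists_apply_eq_of_image_range_flow (hφ0 : ∀ x, φ 0 x = x) (x₀ : X)
    (hsymm : R '' range (fun t => φ t x₀) = range (fun t => φ t x₀)) :
    ∃ y ∈ range (fun t => φ t x₀), R y = y := by
  obtain ⟨T, hT⟩ : R x₀ ∈ range (fun t => φ t x₀) := hsymm ▸ mem_image_of_mem R ⟨0, hφ0 x₀⟩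
  refine ⟨φ (T / 2) x₀, mem_range_self _, ?_⟩
  rw [hconj, ← hT, ← hflow]
  ring_nf

theorem image_range_flow_eq_iff (hφ0 : ∀ x, φ 0 x = x) (x₀ : X) :
    R '' range (fun t => φ t x₀) = range (fun t => φ t x₀) ↔
      ∃ y ∈ range (fun t => φ t x₀), R y = y :=
  ⟨exists_apply_eq_of_image_range_flow hflow hconj hφ0 x₀,
    image_range_flow_of_apply_eq hflow hconj x₀⟩

end Orbit

theorem stmt_6_general (n : ℕ)
    (F : (Fin n → ℝ) → (Fin n → ℝ)) (hF : ContDiff ℝ 1 F)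
    (φ : ℝ → (Fin n → ℝ) → (Fin n → ℝ))
    (hφ0 : ∀ x, φ 0 x = x)
    (hflow : ∀ s t x, φ (s + t) x = φ s (φ t x))
    (hsol : ∀ x t, HasDerivAt (fun τ => φ τ x) (F (φ t x)) t)
    (R : (Fin n → ℝ) → (Fin n → ℝ))
    (DR : (Fin n → ℝ) → ((Fin n → ℝ) →L[ℝ] (Fin n → ℝ)))
    (hR : ∀ x, HasFDerivAt R (DR x) x)
    (hrev : ∀ x, DR x (F x) = -F (R x)) :
    ∀ x₀ : Fin n → ℝ,
      (R '' Set.range (fun t => φ t x₀) = Set.range (fun t => φ t x₀)) ↔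
        ∃ y ∈ Set.range (fun t => φ t x₀), R y = y :=
  image_range_flow_eq_iff hflow
    (apply_flow_eq_flow_neg_apply hF.locallyLipschitz hφ0 hsol hR hrev) hφ0

/-- A reversing-symmetric orbit criterion: for a complete flow φ of a C¹ vector field F
and an involutive reversing symmetry R (i.e. DR(x)F(x) = −F(R(x))), an orbit is
R-symmetric if and only if it intersects the fixed-point set of R. -/
theorem stmt_6 (n : ℕ)
    (F : (Fin n → ℝ) → (Fin n → ℝ)) (hF : ContDiff ℝ 1 F)
    (φ : ℝ → (Fin n → ℝ) → (Fin n → ℝ))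
    (hφ0 : ∀ x, φ 0 x = x)
    (hflow : ∀ s t x, φ (s + t) x = φ s (φ t x))
    (hsol : ∀ x t, HasDerivAt (fun τ => φ τ x) (F (φ t x)) t)
    (R : (Fin n → ℝ) → (Fin n → ℝ))
    (DR : (Fin n → ℝ) → ((Fin n → ℝ) →L[ℝ] (Fin n → ℝ)))
    (hR : ∀ x, HasFDerivAt R (DR x) x)
    (hrev : ∀ x, DR x (F x) = -F (R x))
    (hinvol : ∀ x, R (R x) = x) :
    ∀ x₀ : Fin n → ℝ,
      (R '' Set.range (fun t => φ t x₀) = Set.range (fun t => φ t x₀)) ↔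
        ∃ y ∈ Set.range (fun t => φ t x₀), R y = y :=
  stmt_6_general n F hF φ hφ0 hflow hsol R DR hR hrev
end

section
/- Let θ(t) be a solution of the spin-orbit equation satisfying θ(α) = β for some α ∈ {0, π} and β ∈ {0, π/2}. Then θ satisfies the symmetry relation θ(t) = 2β − θ(2α − t) for all t, and θ̇(t) = θ̇(2α − t). -/
open Real Set
open scoped NNReal

/-!
Writing `c(t) = (λ/2)(a/r(t))³`, the equation is `θ̈ = -c(t) sin(2θ - 2f(t))`. Its first-order form
is Lipschitz in `(θ, θ̇)` with constant `1 + 2|c(t)|`, locally bounded in `t`, so solutions are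
determined by `(θ, θ̇)` at one time. The symmetries of `r` and `f`, together with `4α ≡ 4β mod 2π`,
make `ψ(t) = 2β - θ(2α - t)` a solution again, and `θ(α) = β` gives `(ψ, ψ̇)(α) = (θ, θ̇)(α)`.
-/

theorem ODE_solution_unique_univ_of_continuous_lipschitz
    {E : Type*} [NormedAddCommGroup E] [NormedSpace ℝ E]
    {v : ℝ → E → E} {K : ℝ → ℝ≥0} {u w : ℝ → E} {t₀ : ℝ}
    (hK : Continuous K) (hv : ∀ t, LipschitzWith (K t) (v t))
    (hu : ∀ t, HasDerivAt u (v t (u t)) t) (hw : ∀ t, HasDerivAt w (v t (w t)) t)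
    (heq : u t₀ = w t₀) : u = w := by
  ext1 t
  obtain ⟨A, B, ht, ht₀⟩ : ∃ A B, t ∈ Ioo A B ∧ t₀ ∈ Ioo A B :=
    ⟨min t t₀ - 1, max t t₀ + 1, by constructor <;> constructor <;> grind⟩
  obtain ⟨M, hM⟩ := (isCompact_Icc (a := A) (b := B)).image hK |>.bddAbove
  exact ODE_solution_unique_of_mem_Ioo (s := fun _ ↦ univ)
    (fun s hs ↦ ((hv s).weaken (hM ⟨s, Ioo_subset_Icc_self hs, rfl⟩)).lipschitzOnWith)
    ht₀ (fun s _ ↦ ⟨hu s, trivial⟩) (fun s _ ↦ ⟨hw s, trivial⟩) heq ht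

noncomputable def spinOrbitField (c f : ℝ → ℝ) (t : ℝ) (p : ℝ × ℝ) : ℝ × ℝ :=
  (p.2, -(c t * sin (2 * p.1 - 2 * f t)))

theorem lipschitzWith_spinOrbitField (c f : ℝ → ℝ) (t : ℝ) :
    LipschitzWith (1 + 2 * ‖c t‖₊) (spinOrbitField c f t) := by
  refine LipschitzWith.of_dist_le_mul fun p q ↦ ?_
  have h₁ : dist p.1 q.1 ≤ dist p q := by rw [Prod.dist_eq]; exact le_max_left _ _
  have h₂ : dist p.2 q.2 ≤ dist p q := by rw [Prod.dist_eq]; exact le_max_right _ _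
  have hsin : |sin (2 * p.1 - 2 * f t) - sin (2 * q.1 - 2 * f t)| ≤ 2 * dist p q := by
    calc _ ≤ |(2 * p.1 - 2 * f t) - (2 * q.1 - 2 * f t)| := abs_sin_sub_sin_le _ _
      _ = 2 * dist p.1 q.1 := by rw [Real.dist_eq, ← abs_two, ← abs_mul]; ring_nf
      _ ≤ 2 * dist p q := by linarith
  have hpq := dist_nonneg (x := p) (y := q)
  have hc := norm_nonneg (c t)
  push_cast
  rw [Prod.dist_eq]
  refine max_le (by simp only [spinOrbitField]; nlinarith) ?_
  calc dist (-(c t * sin (2 * p.1 - 2 * f t))) (-(c t * sin (2 * q.1 - 2 * f t)))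
      = ‖c t‖ * |sin (2 * p.1 - 2 * f t) - sin (2 * q.1 - 2 * f t)| := by
        rw [dist_neg_neg, Real.dist_eq, ← mul_sub, abs_mul, Real.norm_eq_abs]
    _ ≤ ‖c t‖ * (2 * dist p q) := by gcongr
    _ ≤ _ := by nlinarith

def IsSpinOrbitSolution (c f θ θ' : ℝ → ℝ) : Prop :=
  ∀ t, HasDerivAt θ (θ' t) t ∧ HasDerivAt θ' (-(c t * sin (2 * θ t - 2 * f t))) t

namespace IsSpinOrbitSolution

variable {c f θ θ' : ℝ → ℝ}

theorem hasDerivAt_prodMk (h : IsSpinOrbitSolution c f θ θ') (t : ℝ) :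
    HasDerivAt (fun s ↦ (θ s, θ' s)) (spinOrbitField c f t (θ t, θ' t)) t :=
  (h t).1.prodMk (h t).2

theorem unique {θ₂ θ₂' : ℝ → ℝ} {t₀ : ℝ} (hc : Continuous c)
    (h : IsSpinOrbitSolution c f θ θ') (h₂ : IsSpinOrbitSolution c f θ₂ θ₂')
    (hθ : θ t₀ = θ₂ t₀) (hθ' : θ' t₀ = θ₂' t₀) : θ = θ₂ ∧ θ' = θ₂' := by
  have := ODE_solution_unique_univ_of_continuous_lipschitz (by fun_prop)
    (lipschitzWith_spinOrbitField c f) h.hasDerivAt_prodMk h₂.hasDerivAt_prodMk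
    (Prod.ext hθ hθ')
  exact ⟨funext fun t ↦ congrArg Prod.fst (congrFun this t),
    funext fun t ↦ congrArg Prod.snd (congrFun this t)⟩

theorem reflect {α β : ℝ} (hc : ∀ t, c (2 * α - t) = c t)
    (hf : ∀ t, f (2 * α - t) = 2 * α - f t) (hαβ : ∃ k : ℤ, α - β = k * (π / 2))
    (h : IsSpinOrbitSolution c f θ θ') :
    IsSpinOrbitSolution c f (fun t ↦ 2 * β - θ (2 * α - t)) (fun t ↦ θ' (2 * α - t)) := by
  intro t
  have hrefl : HasDerivAt (fun s ↦ 2 * α - s) (-1) t := by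
    simpa using (hasDerivAt_id t).const_sub (2 * α)
  obtain ⟨k, hk⟩ := hαβ
  -- the shift by `2kπ` absorbs `4α - 4β`
  have hsin : sin (2 * θ (2 * α - t) - 2 * f (2 * α - t))
      = -sin (2 * (2 * β - θ (2 * α - t)) - 2 * f t) := by
    rw [hf, ← sin_neg, ← sin_add_int_mul_two_pi _ k]
    congr 1
    linear_combination -4 * hk
  constructor
  · simpa using ((h (2 * α - t)).1.comp t hrefl).const_sub (2 * β)
  · refine ((h (2 * α - t)).2.comp t hrefl).congr_deriv ?_
    rw [hc, hsin]
    ring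

end IsSpinOrbitSolution

theorem stmt_8_general (a lam α β : ℝ)
    (hα : α = 0 ∨ α = π) (hβ : β = 0 ∨ β = π / 2)
    (r f : ℝ → ℝ) (hrc : Continuous r) (hrpos : ∀ t, 0 < r t)
    (hrsym : ∀ t, r (2 * α - t) = r t)
    (hfsym : ∀ t, f (2 * α - t) = 2 * α - f t)
    (θ θ' θ'' : ℝ → ℝ)
    (hd1 : ∀ t, HasDerivAt θ (θ' t) t)
    (hd2 : ∀ t, HasDerivAt θ' (θ'' t) t)
    (hode : ∀ t, θ'' t + (lam / 2) * (a / r t) ^ 3 * Real.sin (2 * θ t - 2 * f t) = 0)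
    (hbc : θ α = β) :
    ∀ t, θ t = 2 * β - θ (2 * α - t) ∧ θ' t = θ' (2 * α - t) := by
  set c : ℝ → ℝ := fun t ↦ lam / 2 * (a / r t) ^ 3
  have hc : Continuous c := by
    have := fun t ↦ (hrpos t).ne'
    fun_prop (disch := assumption)
  have hcsym : ∀ t, c (2 * α - t) = c t := fun t ↦ by simp only [c, hrsym]
  have hsol : IsSpinOrbitSolution c f θ θ' := fun t ↦
    ⟨hd1 t, (hd2 t).congr_deriv (by linear_combination hode t)⟩
  have hαβ : ∃ k : ℤ, α - β = k * (π / 2) := by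
    rcases hα with rfl | rfl <;> rcases hβ with rfl | rfl
    exacts [⟨0, by simp⟩, ⟨-1, by simp⟩, ⟨2, by push_cast; ring⟩, ⟨1, by push_cast; ring⟩]
  obtain ⟨hθ, hθ'⟩ := hsol.unique (t₀ := α) hc (hsol.reflect hcsym hfsym hαβ)
    (by rw [show 2 * α - α = α by ring, hbc]; ring) (by rw [show 2 * α - α = α by ring])
  exact fun t ↦ ⟨congrFun hθ t, congrFun hθ' t⟩

/-- If a solution of the spin-orbit equation satisfies θ(α) = β with α ∈ {0, π},
β ∈ {0, π/2}, then θ(t) = 2β − θ(2α − t) and θ̇(t) = θ̇(2α − t) for all t. -/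
theorem stmt_8 (e a lam α β : ℝ) (he0 : 0 ≤ e) (he1 : e < 1) (ha : 0 < a)
    (hα : α = 0 ∨ α = π) (hβ : β = 0 ∨ β = π / 2)
    (r f : ℝ → ℝ) (hrc : Continuous r) (hfc : Continuous f) (hrpos : ∀ t, 0 < r t)
    (hrsym : ∀ t, r (2 * α - t) = r t)
    (hfsym : ∀ t, f (2 * α - t) = 2 * α - f t)
    (θ θ' θ'' : ℝ → ℝ)
    (hd1 : ∀ t, HasDerivAt θ (θ' t) t)
    (hd2 : ∀ t, HasDerivAt θ' (θ'' t) t)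
    (hode : ∀ t, θ'' t + (lam / 2) * (a / r t) ^ 3 * Real.sin (2 * θ t - 2 * f t) = 0)
    (hbc : θ α = β) :
    ∀ t, θ t = 2 * β - θ (2 * α - t) ∧ θ' t = θ' (2 * α - t) :=
  stmt_8_general a lam α β hα hβ r f hrc hrpos hrsym hfsym θ θ' θ'' hd1 hd2 hode hbc
end

section
/- Let θ(t) be a solution of the spin-orbit equation satisfying the Dirichlet conditions θ(α) = β and θ(α + nπ) = β + mπ, for integers m, n with n ≠ 0, α ∈ {0, π}, β ∈ {0, π/2}. Then θ is in an m:n spin-orbit resonance, i.e., θ(t + 2πn) = θ(t) + 2πm for all t. -/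
/-!
Both Dirichlet conditions are reflection points of the solution. Since `r` is even and `f` odd
about `α`, and `2(β - α) ∈ πℤ`, the map `t ↦ 2β - θ(2α - t)` is again a solution with the same
data at `α` as `θ`; by uniqueness `θ(t) + θ(2α - t) = 2β`. Periodicity moves the symmetries of
`r` and `f` to `α + nπ`, so likewise `θ(t) + θ(2(α + nπ) - t) = 2(β + mπ)`. Composing the two
reflections gives the translation `θ(t + 2πn) = θ(t) + 2πm`.
-/

open Real Function Bornology
open scoped NNReal

theorem Function.Periodic.map_reflect_add_int_mul {g : ℝ → ℝ} {c α : ℝ} (hp : Periodic g (2 * c))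
    (hs : ∀ t, g (2 * α - t) = g t) (n : ℤ) (t : ℝ) : g (2 * (α + n * c) - t) = g t := by
  rw [show 2 * (α + n * c) - t = 2 * α - t + n * (2 * c) by ring, hp.int_mul n, hs]

theorem map_add_int_mul_of_map_add {f : ℝ → ℝ} {c : ℝ} (hf : ∀ t, f (t + c) = f t + c) (n : ℤ)
    (t : ℝ) : f (t + n * c) = f t + n * c := by
  have hp : Periodic (fun t => f t - t) c := fun t => by simp only [hf]; ring
  linarith [hp.int_mul n t]

theorem map_reflect_add_int_mul_of_map_add {f : ℝ → ℝ} {c α : ℝ}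
    (hf : ∀ t, f (t + 2 * c) = f t + 2 * c) (hs : ∀ t, f (2 * α - t) = 2 * α - f t) (n : ℤ)
    (t : ℝ) : f (2 * (α + n * c) - t) = 2 * (α + n * c) - f t := by
  rw [show 2 * (α + n * c) - t = 2 * α - t + n * (2 * c) by ring, map_add_int_mul_of_map_add hf,
    hs]
  ring

namespace SpinOrbit

-- The phase-space field of `θ'' = -C t * sin (2θ - 2 f t)`, where `C t = (λ/2) (a / r t)³`.
noncomputable def field (C f : ℝ → ℝ) (t : ℝ) (p : ℝ × ℝ) : ℝ × ℝ :=
  (p.2, -(C t * sin (2 * p.1 - 2 * f t)))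

theorem exists_lipschitzWith_field {C : ℝ → ℝ} (hC : IsBounded (Set.range C)) (f : ℝ → ℝ) :
    ∃ K, ∀ t, LipschitzWith K (field C f t) := by
  obtain ⟨M, hM⟩ := hC.exists_norm_le
  refine ⟨max 1 (2 * M.toNNReal), fun t => LipschitzWith.prod_snd.prodMk ?_⟩
  refine LipschitzWith.of_dist_le_mul fun p q => ?_
  have hCt : |C t| ≤ M := hM _ ⟨t, rfl⟩
  have hsin := Real.lipschitzWith_sin.dist_le_mul (2 * p.1 - 2 * f t) (2 * q.1 - 2 * f t)
  have hfst := LipschitzWith.prod_fst.dist_le_mul p q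
  simp only [NNReal.coe_one, one_mul, Real.dist_eq] at hsin hfst ⊢
  calc |-(C t * sin (2 * p.1 - 2 * f t)) - -(C t * sin (2 * q.1 - 2 * f t))|
      = |C t| * |sin (2 * p.1 - 2 * f t) - sin (2 * q.1 - 2 * f t)| := by
        rw [← abs_mul, mul_sub, neg_sub_neg, abs_sub_comm]
    _ ≤ M * (2 * dist p q) := by
        gcongr
        · exact (abs_nonneg _).trans hCt
        · calc _ ≤ _ := hsin
            _ = 2 * |p.1 - q.1| := by rw [← abs_two, ← abs_mul]; ring_nf
            _ ≤ 2 * dist p q := by gcongr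
    _ = (2 * M) * dist p q := by ring
    _ ≤ (2 * M.toNNReal : ℝ≥0) * dist p q := by
        push_cast
        gcongr
        exact Real.le_coe_toNNReal M

section Reflection

variable {C f θ θ' θ'' : ℝ → ℝ}

theorem hasDerivAt_field (hd1 : ∀ t, HasDerivAt θ (θ' t) t) (hd2 : ∀ t, HasDerivAt θ' (θ'' t) t)
    (hode : ∀ t, θ'' t = -(C t * sin (2 * θ t - 2 * f t))) (t : ℝ) :
    HasDerivAt (fun s => (θ s, θ' s)) (field C f t (θ t, θ' t)) t := by
  rw [field, ← hode]
  exact (hd1 t).prodMk (hd2 t)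

variable {α β : ℝ} (hCsym : ∀ t, C (2 * α - t) = C t) (hfsym : ∀ t, f (2 * α - t) = 2 * α - f t)
  (hk : ∃ k : ℤ, 2 * (β - α) = k * π)
include hCsym hfsym hk

theorem hasDerivAt_field_reflect (hd1 : ∀ t, HasDerivAt θ (θ' t) t)
    (hd2 : ∀ t, HasDerivAt θ' (θ'' t) t)
    (hode : ∀ t, θ'' t = -(C t * sin (2 * θ t - 2 * f t))) (t : ℝ) :
    HasDerivAt (fun s => (2 * β - θ (2 * α - s), θ' (2 * α - s)))
      (field C f t (2 * β - θ (2 * α - t), θ' (2 * α - t))) t := by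
  have hr : HasDerivAt (fun s => 2 * α - s) (-1) t := by
    simpa using (hasDerivAt_id t).const_sub (2 * α)
  have h1 := ((hd1 (2 * α - t)).comp t hr).const_sub (2 * β)
  have h2 := (hd2 (2 * α - t)).comp t hr
  refine (h1.prodMk h2).congr_deriv ?_
  obtain ⟨k, hk⟩ := hk
  have harg : 2 * (2 * β - θ (2 * α - t)) - 2 * f t
      = k * (2 * π) - (2 * θ (2 * α - t) - 2 * f (2 * α - t)) := by
    rw [hfsym]; linear_combination 2 * hk
  simp only [field, harg, sin_int_mul_two_pi_sub, hode, hCsym]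
  ext <;> ring

theorem add_reflect_eq (hd1 : ∀ t, HasDerivAt θ (θ' t) t) (hd2 : ∀ t, HasDerivAt θ' (θ'' t) t)
    (hode : ∀ t, θ'' t = -(C t * sin (2 * θ t - 2 * f t))) (hC : IsBounded (Set.range C))
    (hθ : θ α = β) (t : ℝ) : θ t + θ (2 * α - t) = 2 * β := by
  obtain ⟨K, hK⟩ := exists_lipschitzWith_field hC f
  have h := ODE_solution_unique_univ (s := fun _ => Set.univ) (t₀ := α)
    (fun t => (hK t).lipschitzOnWith)
    (fun t => ⟨hasDerivAt_field hd1 hd2 hode t, trivial⟩)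
    (fun t => ⟨hasDerivAt_field_reflect hCsym hfsym hk hd1 hd2 hode t, trivial⟩)
    (by rw [show 2 * α - α = α by ring, hθ]; congr 1; ring)
  have := congrArg Prod.fst (congrFun h t)
  simp only at this
  linarith

end Reflection

end SpinOrbit

open SpinOrbit in
theorem stmt_9_general (a lam α β : ℝ)
    (m n : ℤ)
    (hα : α = 0 ∨ α = π) (hβ : β = 0 ∨ β = π / 2)
    (r f : ℝ → ℝ) (hrc : Continuous r) (hrpos : ∀ t, 0 < r t)
    (hrper : ∀ t, r (t + 2 * π) = r t)
    (hfper : ∀ t, f (t + 2 * π) = f t + 2 * π)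
    (hrsym : ∀ t, r (2 * α - t) = r t)
    (hfsym : ∀ t, f (2 * α - t) = 2 * α - f t)
    (θ θ' θ'' : ℝ → ℝ)
    (hd1 : ∀ t, HasDerivAt θ (θ' t) t)
    (hd2 : ∀ t, HasDerivAt θ' (θ'' t) t)
    (hode : ∀ t, θ'' t + (lam / 2) * (a / r t) ^ 3 * Real.sin (2 * θ t - 2 * f t) = 0)
    (hbc1 : θ α = β) (hbc2 : θ (α + n * π) = β + m * π) :
    ∀ t, θ (t + 2 * π * n) = θ t + 2 * π * m := by
  set C : ℝ → ℝ := fun t => lam / 2 * (a / r t) ^ 3 with hC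
  have hCper : Periodic C (2 * π) := fun t => by simp only [hC, hrper]
  have hCbdd : IsBounded (Set.range C) := hCper.isBounded_of_continuous two_pi_pos.ne'
    (continuous_const.mul ((continuous_const.div hrc fun t => (hrpos t).ne').pow 3))
  have hCsym : ∀ t, C (2 * α - t) = C t := fun t => by simp only [hC, hrsym]
  have hode' : ∀ t, θ'' t = -(C t * sin (2 * θ t - 2 * f t)) := fun t => by
    simp only [hC]; linarith [hode t]
  obtain ⟨k, hk⟩ : ∃ k : ℤ, 2 * (β - α) = k * π := by
    rcases hα with rfl | rfl <;> rcases hβ with rfl | rfl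
    exacts [⟨0, by simp⟩, ⟨1, by push_cast; ring⟩, ⟨-2, by push_cast; ring⟩,
      ⟨-1, by push_cast; ring⟩]
  have hk' : ∃ k : ℤ, 2 * (β + m * π - (α + n * π)) = k * π :=
    ⟨k + 2 * m - 2 * n, by push_cast; linear_combination hk⟩
  intro t
  have h1 := add_reflect_eq hCsym hfsym ⟨k, hk⟩ hd1 hd2 hode' hCbdd hbc1 t
  have h2 := add_reflect_eq (hCper.map_reflect_add_int_mul hCsym n)
    (map_reflect_add_int_mul_of_map_add hfper hfsym n) hk' hd1 hd2 hode' hCbdd hbc2 (2 * α - t)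
  rw [show 2 * (α + n * π) - (2 * α - t) = t + 2 * π * n by ring] at h2
  linarith

/-- Dirichlet conditions θ(α) = β, θ(α + nπ) = β + mπ for a symmetric solution of the
spin-orbit equation imply the m:n spin-orbit resonance θ(t + 2πn) = θ(t) + 2πm. -/
theorem stmt_9 (e a lam α β : ℝ) (he0 : 0 ≤ e) (he1 : e < 1) (ha : 0 < a)
    (m n : ℤ) (hn : n ≠ 0)
    (hα : α = 0 ∨ α = π) (hβ : β = 0 ∨ β = π / 2)
    (r f : ℝ → ℝ) (hrc : Continuous r) (hfc : Continuous f) (hrpos : ∀ t, 0 < r t)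
    (hrper : ∀ t, r (t + 2 * π) = r t)
    (hfper : ∀ t, f (t + 2 * π) = f t + 2 * π)
    (hrsym : ∀ t, r (2 * α - t) = r t)
    (hfsym : ∀ t, f (2 * α - t) = 2 * α - f t)
    (θ θ' θ'' : ℝ → ℝ)
    (hd1 : ∀ t, HasDerivAt θ (θ' t) t)
    (hd2 : ∀ t, HasDerivAt θ' (θ'' t) t)
    (hode : ∀ t, θ'' t + (lam / 2) * (a / r t) ^ 3 * Real.sin (2 * θ t - 2 * f t) = 0)
    (hbc1 : θ α = β) (hbc2 : θ (α + n * π) = β + m * π) :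
    ∀ t, θ (t + 2 * π * n) = θ t + 2 * π * m :=
  stmt_9_general a lam α β m n hα hβ r f hrc hrpos hrper hfper hrsym hfsym θ θ' θ'' hd1 hd2 hode
    hbc1 hbc2
end

section
/- Let (θ₁(t), θ₂(t)) be a solution of the spin-spin system satisfying θⱼ(0) = βⱼ and θⱼ(π) = βⱼ + mⱼπ/2 for j = 1,2, with βⱼ ∈ {0, π/2} and mⱼ ∈ ℤ. Then the solution is in a balanced (m₁:2, m₂:2) spin-spin resonance, i.e., θⱼ(t + 2π) = θⱼ(t) + mⱼπ for all t and both j, and it satisfies the symmetry relations θⱼ(t) = 2βⱼ − θⱼ(−t). -/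
/-!
For `(τ, b) ∈ πℤ × ((π/2)ℤ)²` the symmetry of `W` makes `∂W/∂θⱼ` odd under
`(t, θ) ↦ (2τ - t, 2b - θ)`, so the reflected curve `t ↦ 2b - θ(2τ - t)` solves the system
again. A solution with `θ(τ) = b` meets its reflection at `t = τ` with the same velocity, hence
equals it by uniqueness for the `C¹` (so locally Lipschitz) phase-space field. The boundary
conditions give this for `τ = 0` and `τ = π`, and the two reflections compose to the translation
`t ↦ t + 2π`, shifting `θⱼ` by `2 (mⱼπ/2) = mⱼπ`.
-/

open Real Set

theorem ODE_solution_unique_of_locallyLipschitz {E : Type*} [NormedAddCommGroup E]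
    [NormedSpace ℝ E] {v : ℝ → E → E} (hv : LocallyLipschitz (Function.uncurry v))
    {f g : ℝ → E} (hf : ∀ t, HasDerivAt f (v t (f t)) t)
    (hg : ∀ t, HasDerivAt g (v t (g t)) t) {t₀ : ℝ} (heq : f t₀ = g t₀) : f = g := by
  funext t
  obtain ⟨a, b, ht, ht₀⟩ : ∃ a b, t ∈ Ioo a b ∧ t₀ ∈ Ioo a b :=
    ⟨min t t₀ - 1, max t t₀ + 1, by grind⟩
  have hgraph : ∀ {h : ℝ → E}, (∀ t, HasDerivAt h (v t (h t)) t) →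
      IsCompact ((fun s => (s, h s)) '' Icc a b) := fun hh =>
    isCompact_Icc.image (continuous_id.prodMk (continuous_iff_continuousAt.2 fun s =>
      (hh s).continuousAt))
  obtain ⟨K, hK⟩ := hv.locallyLipschitzOn.exists_lipschitzOnWith_of_compact
    ((hgraph hf).union (hgraph hg))
  refine ODE_solution_unique_of_mem_Ioo (s := fun s => {f s, g s})
    (fun s hs => hK.comp (LipschitzWith.prodMk_left s).lipschitzOnWith ?_) ht₀
    (fun s _ => ⟨hf s, by simp⟩) (fun s _ => ⟨hg s, by simp⟩) heq ht
  rintro x (rfl | rfl)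
  · exact Or.inl ⟨s, Ioo_subset_Icc_self hs, rfl⟩
  · exact Or.inr ⟨s, Ioo_subset_Icc_self hs, rfl⟩

theorem HasDerivAt.eq_neg_of_comp_const_sub {f g : ℝ → ℝ} {f' g' c x : ℝ}
    (hfg : ∀ s, f (c - s) = g s) (hf : HasDerivAt f f' (c - x)) (hg : HasDerivAt g g' x) :
    f' = -g' := by
  have h := hf.comp x ((hasDerivAt_id x).const_sub c)
  rw [show f ∘ (c - ·) = g from funext hfg] at h
  linarith [h.unique hg]

noncomputable def spinSpinField (C1 C2 : ℝ) (W1 W2 : ℝ → ℝ → ℝ → ℝ) (t : ℝ)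
    (z : (ℝ × ℝ) × ℝ × ℝ) : (ℝ × ℝ) × ℝ × ℝ :=
  (z.2, (-(1 / C1) * W1 t z.1.1 z.1.2, -(1 / C2) * W2 t z.1.1 z.1.2))

theorem locallyLipschitz_spinSpinField {C1 C2 : ℝ} {W1 W2 : ℝ → ℝ → ℝ → ℝ}
    (hW1 : ContDiff ℝ 1 (fun p : ℝ × ℝ × ℝ => W1 p.1 p.2.1 p.2.2))
    (hW2 : ContDiff ℝ 1 (fun p : ℝ × ℝ × ℝ => W2 p.1 p.2.1 p.2.2)) :
    LocallyLipschitz (Function.uncurry (spinSpinField C1 C2 W1 W2)) := by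
  have hpos : ContDiff ℝ 1 fun p : ℝ × (ℝ × ℝ) × ℝ × ℝ => (p.1, p.2.1.1, p.2.1.2) := by
    fun_prop
  have hW1' := hW1.comp hpos
  have hW2' := hW2.comp hpos
  refine ContDiff.locallyLipschitz (𝕂 := ℝ) ?_
  unfold spinSpinField Function.uncurry
  fun_prop

section SpinSpin

variable {C1 C2 : ℝ} {W W1 W2 : ℝ → ℝ → ℝ → ℝ} {θ1 θ2 θ1' θ2' : ℝ → ℝ}
  (hd11 : ∀ t, HasDerivAt θ1 (θ1' t) t)
  (hd12 : ∀ t, HasDerivAt θ1' (-(1 / C1) * W1 t (θ1 t) (θ2 t)) t)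
  (hd21 : ∀ t, HasDerivAt θ2 (θ2' t) t)
  (hd22 : ∀ t, HasDerivAt θ2' (-(1 / C2) * W2 t (θ1 t) (θ2 t)) t)
include hd11 hd12 hd21 hd22

theorem hasDerivAt_spinSpin_phase (t : ℝ) :
    HasDerivAt (fun t => ((θ1 t, θ2 t), (θ1' t, θ2' t)))
      (spinSpinField C1 C2 W1 W2 t ((θ1 t, θ2 t), (θ1' t, θ2' t))) t :=
  ((hd11 t).prodMk (hd21 t)).prodMk ((hd12 t).prodMk (hd22 t))

theorem hasDerivAt_spinSpin_reflection {τ b1 b2 : ℝ}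
    (hW1 : ∀ t x y, W1 (2 * τ - t) (2 * b1 - x) (2 * b2 - y) = -W1 t x y)
    (hW2 : ∀ t x y, W2 (2 * τ - t) (2 * b1 - x) (2 * b2 - y) = -W2 t x y) (t : ℝ) :
    HasDerivAt (fun t => ((2 * b1 - θ1 (2 * τ - t), 2 * b2 - θ2 (2 * τ - t)),
        (θ1' (2 * τ - t), θ2' (2 * τ - t))))
      (spinSpinField C1 C2 W1 W2 t ((2 * b1 - θ1 (2 * τ - t), 2 * b2 - θ2 (2 * τ - t)),
        (θ1' (2 * τ - t), θ2' (2 * τ - t)))) t := by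
  have hτ : HasDerivAt (2 * τ - ·) (-1) t := by simpa using (hasDerivAt_id t).const_sub (2 * τ)
  have hW1t := hW1 t (2 * b1 - θ1 (2 * τ - t)) (2 * b2 - θ2 (2 * τ - t))
  have hW2t := hW2 t (2 * b1 - θ1 (2 * τ - t)) (2 * b2 - θ2 (2 * τ - t))
  simp only [sub_sub_cancel] at hW1t hW2t
  refine (HasDerivAt.prodMk ?_ ?_).prodMk (HasDerivAt.prodMk ?_ ?_)
  · simpa using ((hd11 _).comp t hτ).const_sub (2 * b1)
  · simpa using ((hd21 _).comp t hτ).const_sub (2 * b2)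
  · refine ((hd12 _).comp t hτ).congr_deriv ?_
    rw [hW1t]
    ring
  · refine ((hd22 _).comp t hτ).congr_deriv ?_
    rw [hW2t]
    ring

theorem spinSpin_eq_reflection
    (hW1 : ∀ t x y, HasDerivAt (fun s => W t s y) (W1 t x y) x)
    (hW2 : ∀ t x y, HasDerivAt (fun s => W t x s) (W2 t x y) y)
    (hW1smooth : ContDiff ℝ 1 (fun p : ℝ × ℝ × ℝ => W1 p.1 p.2.1 p.2.2))
    (hW2smooth : ContDiff ℝ 1 (fun p : ℝ × ℝ × ℝ => W2 p.1 p.2.1 p.2.2))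
    {τ b1 b2 : ℝ} (hsym : ∀ t x y, W (2 * τ - t) (2 * b1 - x) (2 * b2 - y) = W t x y)
    (h1 : θ1 τ = b1) (h2 : θ2 τ = b2) (t : ℝ) :
    θ1 t = 2 * b1 - θ1 (2 * τ - t) ∧ θ2 t = 2 * b2 - θ2 (2 * τ - t) := by
  have hW1refl : ∀ t x y, W1 (2 * τ - t) (2 * b1 - x) (2 * b2 - y) = -W1 t x y :=
    fun t x y => (hW1 _ _ _).eq_neg_of_comp_const_sub (fun s => hsym t s y) (hW1 t x y)
  have hW2refl : ∀ t x y, W2 (2 * τ - t) (2 * b1 - x) (2 * b2 - y) = -W2 t x y :=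
    fun t x y => (hW2 _ _ _).eq_neg_of_comp_const_sub (fun s => hsym t x s) (hW2 t x y)
  have h := congrFun (ODE_solution_unique_of_locallyLipschitz
    (locallyLipschitz_spinSpinField hW1smooth hW2smooth)
    (hasDerivAt_spinSpin_phase hd11 hd12 hd21 hd22)
    (hasDerivAt_spinSpin_reflection hd11 hd12 hd21 hd22 hW1refl hW2refl) (t₀ := τ)
    (by simp only [two_mul, add_sub_cancel_right, h1, h2])) t
  exact ⟨congrArg (·.1.1) h, congrArg (·.1.2) h⟩

end SpinSpin

theorem add_two_mul_of_reflections {θ : ℝ → ℝ} {τ a b : ℝ} (h0 : ∀ t, θ t = 2 * a - θ (-t))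
    (hτ : ∀ t, θ t = 2 * b - θ (2 * τ - t)) (t : ℝ) : θ (t + 2 * τ) = θ t + 2 * (b - a) := by
  rw [hτ, show 2 * τ - (t + 2 * τ) = -t by ring, h0 t]
  ring

theorem stmt_15_general (C1 C2 : ℝ)
    (W W1 W2 : ℝ → ℝ → ℝ → ℝ)
    (hW1 : ∀ t x y, HasDerivAt (fun s => W t s y) (W1 t x y) x)
    (hW2 : ∀ t x y, HasDerivAt (fun s => W t x s) (W2 t x y) y)
    (hW1smooth : ContDiff ℝ 1 (fun p : ℝ × ℝ × ℝ => W1 p.1 p.2.1 p.2.2))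
    (hW2smooth : ContDiff ℝ 1 (fun p : ℝ × ℝ × ℝ => W2 p.1 p.2.1 p.2.2))
    (hWsym : ∀ (k l1 l2 : ℤ) (t x y : ℝ),
      W (2 * (π * k) - t) (2 * ((π / 2) * l1) - x) (2 * ((π / 2) * l2) - y) = W t x y)
    (β1 β2 : ℝ) (hβ1 : β1 = 0 ∨ β1 = π / 2) (hβ2 : β2 = 0 ∨ β2 = π / 2)
    (m1 m2 : ℤ)
    (θ1 θ2 θ1' θ2' : ℝ → ℝ)
    (hd11 : ∀ t, HasDerivAt θ1 (θ1' t) t)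
    (hd12 : ∀ t, HasDerivAt θ1' (-(1 / C1) * W1 t (θ1 t) (θ2 t)) t)
    (hd21 : ∀ t, HasDerivAt θ2 (θ2' t) t)
    (hd22 : ∀ t, HasDerivAt θ2' (-(1 / C2) * W2 t (θ1 t) (θ2 t)) t)
    (hbc10 : θ1 0 = β1) (hbc1π : θ1 π = β1 + m1 * π / 2)
    (hbc20 : θ2 0 = β2) (hbc2π : θ2 π = β2 + m2 * π / 2) :
    (∀ t, θ1 (t + 2 * π) = θ1 t + m1 * π ∧ θ2 (t + 2 * π) = θ2 t + m2 * π) ∧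
    (∀ t, θ1 t = 2 * β1 - θ1 (-t) ∧ θ2 t = 2 * β2 - θ2 (-t)) := by
  have half_pi_mul : ∀ β : ℝ, β = 0 ∨ β = π / 2 → ∃ l : ℤ, π / 2 * l = β := by
    rintro β (rfl | rfl)
    exacts [⟨0, by simp⟩, ⟨1, by simp⟩]
  obtain ⟨l1, rfl⟩ := half_pi_mul β1 hβ1
  obtain ⟨l2, rfl⟩ := half_pi_mul β2 hβ2
  have hsymπ : ∀ t x y, W (2 * π - t) (2 * (π / 2 * l1 + m1 * π / 2) - x)
      (2 * (π / 2 * l2 + m2 * π / 2) - y) = W t x y := by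
    intro t x y
    convert hWsym 1 (l1 + m1) (l2 + m2) t x y using 3 <;> push_cast <;> ring
  have hrefl0 : ∀ t,
      θ1 t = 2 * (π / 2 * l1) - θ1 (-t) ∧ θ2 t = 2 * (π / 2 * l2) - θ2 (-t) := fun t => by
    simpa only [Int.cast_zero, mul_zero, zero_sub] using spinSpin_eq_reflection hd11 hd12 hd21
      hd22 hW1 hW2 hW1smooth hW2smooth (τ := π * (0 : ℤ)) (hWsym 0 l1 l2)
      (by simpa using hbc10) (by simpa using hbc20) t
  have hreflπ := spinSpin_eq_reflection hd11 hd12 hd21 hd22 hW1 hW2 hW1smooth hW2smooth hsymπ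
    hbc1π hbc2π
  refine ⟨fun t => ⟨?_, ?_⟩, hrefl0⟩
  · rw [add_two_mul_of_reflections (fun t => (hrefl0 t).1) (fun t => (hreflπ t).1)]
    ring
  · rw [add_two_mul_of_reflections (fun t => (hrefl0 t).2) (fun t => (hreflπ t).2)]
    ring

/-- Dirichlet conditions θⱼ(0) = βⱼ, θⱼ(π) = βⱼ + mⱼπ/2 for the spin-spin system imply
a balanced (m₁:2, m₂:2) spin-spin resonance, together with the symmetry relations
θⱼ(t) = 2βⱼ − θⱼ(−t). -/
theorem stmt_15 (C1 C2 : ℝ) (hC1 : 0 < C1) (hC2 : 0 < C2)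
    (W W1 W2 : ℝ → ℝ → ℝ → ℝ)
    (hW1 : ∀ t x y, HasDerivAt (fun s => W t s y) (W1 t x y) x)
    (hW2 : ∀ t x y, HasDerivAt (fun s => W t x s) (W2 t x y) y)
    (hW1smooth : ContDiff ℝ 1 (fun p : ℝ × ℝ × ℝ => W1 p.1 p.2.1 p.2.2))
    (hW2smooth : ContDiff ℝ 1 (fun p : ℝ × ℝ × ℝ => W2 p.1 p.2.1 p.2.2))
    (hWtper : ∀ t x y, W (t + 2 * π) x y = W t x y)
    (hWθ1per : ∀ t x y, W t (x + π) y = W t x y)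
    (hWθ2per : ∀ t x y, W t x (y + π) = W t x y)
    (hWsym : ∀ (k l1 l2 : ℤ) (t x y : ℝ),
      W (2 * (π * k) - t) (2 * ((π / 2) * l1) - x) (2 * ((π / 2) * l2) - y) = W t x y)
    (β1 β2 : ℝ) (hβ1 : β1 = 0 ∨ β1 = π / 2) (hβ2 : β2 = 0 ∨ β2 = π / 2)
    (m1 m2 : ℤ)
    (θ1 θ2 θ1' θ2' : ℝ → ℝ)
    (hd11 : ∀ t, HasDerivAt θ1 (θ1' t) t)
    (hd12 : ∀ t, HasDerivAt θ1' (-(1 / C1) * W1 t (θ1 t) (θ2 t)) t)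
    (hd21 : ∀ t, HasDerivAt θ2 (θ2' t) t)
    (hd22 : ∀ t, HasDerivAt θ2' (-(1 / C2) * W2 t (θ1 t) (θ2 t)) t)
    (hbc10 : θ1 0 = β1) (hbc1π : θ1 π = β1 + m1 * π / 2)
    (hbc20 : θ2 0 = β2) (hbc2π : θ2 π = β2 + m2 * π / 2) :
    (∀ t, θ1 (t + 2 * π) = θ1 t + m1 * π ∧ θ2 (t + 2 * π) = θ2 t + m2 * π) ∧
    (∀ t, θ1 t = 2 * β1 - θ1 (-t) ∧ θ2 t = 2 * β2 - θ2 (-t)) :=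
  stmt_15_general C1 C2 W W1 W2 hW1 hW2 hW1smooth hW2smooth hWsym β1 β2 hβ1 hβ2 m1 m2 θ1 θ2 θ1' θ2'
    hd11 hd12 hd21 hd22 hbc10 hbc1π hbc20 hbc2π
end
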